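/- For any S ⊆ F_2^n with s = |S|, one has Σ_{u∈F_2^n} (\widehat{1_S}(u))^4 ≥ 2^n(3s^2 − 2s), with equality if and only if S is a Sidon set. -/

import Mathlib

open Finset
def dotp {n : ℕ} (a x : Fin n → ZMod 2) : ZMod 2 := ∑ i, a i * x i
def chi {n : ℕ} (a x : Fin n → ZMod 2) : ℤ := (-1 : ℤ) ^ (dotp a x).val
def fourierS {n : ℕ} (S : Finset (Fin n → ZMod 2)) (u : Fin n → ZMod 2) : ℤ :=
  ∑ x ∈ S, chi u x
def IsSidon {n : ℕ} (S : Set (Fin n → ZMod 2)) : Prop :=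
  ∀ a ∈ S, ∀ b ∈ S, ∀ c ∈ S, ∀ d ∈ S,
    a ≠ b → c ≠ d → a + b = c + d → ({a, b} : Set (Fin n → ZMod 2)) = {c, d}
def IsKCover {n : ℕ} (S : Finset (Fin n → ZMod 2)) (k : ℕ) : Prop :=
  0 < k ∧ ∀ p ∉ S,
    {T : Finset (Fin n → ZMod 2) | T ⊆ S ∧ T.card = 3 ∧ ∑ x ∈ T, x = p}.ncard = k
def cayGamma {n : ℕ} (S : Set (Fin n → ZMod 2)) : SimpleGraph (Fin n → ZMod 2) where
  Adj u v := u + v ≠ 0 ∧ ∃ x ∈ S, (u + v) + x ∈ S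
  symm := ⟨by intro u v h; rwa [add_comm v u]⟩
  loopless := ⟨by
    intro u h
    apply h.1
    funext i
    exact CharTwo.add_self_eq_zero (u i)⟩

/-!
Expanding the fourth power and using orthogonality of characters gives
`∑ u, fourierS S u ^ 4 = 2 ^ n * E[S]`, where the additive energy is `E[S] = ∑ x, r x ^ 2` and
`r x` counts the ordered pairs `(a, b) ∈ S × S` with `a + b = x`. In characteristic two
`r 0 = #S`, and for `x ≠ 0` the pairs `(a, b)` and `(b, a)` are distinct, so `r x` is `0` or at
least `2`. As `∑ x, r x = #S ^ 2`, this gives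
`E[S] = 3 #S ^ 2 - 2 #S + ∑ x ≠ 0, r x (r x - 2)`, a sum of nonnegative terms, which vanishes
exactly when every `x ≠ 0` has at most two representations, that is, when `S` is a Sidon set.
-/

open scoped Combinatorics.Additive

section ExponentTwo

variable {α : Type*} [AddCommGroup α]

lemma add_eq_zero_iff_eq_of_add_self (hα : ∀ x : α, x + x = 0) {a b : α} :
    a + b = 0 ↔ a = b := by
  rw [add_eq_zero_iff_eq_neg, neg_eq_of_add_eq_zero_left (hα b)]

variable [DecidableEq α]

def addRepCount (s : Finset α) (x : α) : ℕ := #{p ∈ s ×ˢ s | p.1 + p.2 = x}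

lemma addRepCount_zero (hα : ∀ x : α, x + x = 0) (s : Finset α) : addRepCount s 0 = #s := by
  rw [addRepCount, ← diag_card s, diag_eq_filter]
  simp_rw [add_eq_zero_iff_eq_of_add_self hα]

lemma sum_addRepCount [Fintype α] (s : Finset α) : ∑ x, addRepCount s x = #s ^ 2 := by
  rw [sq, ← card_product, card_eq_sum_card_fiberwise (f := fun p : α × α => p.1 + p.2) (t := univ)
    (fun _ _ => mem_univ _)]
  rfl

lemma addRepCount_eq_zero_or_two_le (hα : ∀ x : α, x + x = 0) (s : Finset α) {x : α}
    (hx : x ≠ 0) : addRepCount s x = 0 ∨ 2 ≤ addRepCount s x := by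
  rcases (filter (fun p : α × α => p.1 + p.2 = x) (s ×ˢ s)).eq_empty_or_nonempty
    with h | ⟨⟨a, b⟩, hab⟩
  · exact .inl (by rw [addRepCount, h, card_empty])
  · right
    simp only [mem_filter, mem_product] at hab
    obtain ⟨⟨ha, hb⟩, rfl⟩ := hab
    refine one_lt_card.2 ⟨(a, b), by simp [ha, hb], (b, a), by simp [ha, hb, add_comm], ?_⟩
    rintro ⟨⟩
    exact hx (hα a)

lemma addEnergy_self_eq [Fintype α] (hα : ∀ x : α, x + x = 0) (s : Finset α) :
    (E[s] : ℤ) = 3 * #s ^ 2 - 2 * #s +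
      ∑ x ∈ univ.erase 0, (addRepCount s x : ℤ) * (addRepCount s x - 2) := by
  have hsum : (addRepCount s 0 : ℤ) + ∑ x ∈ univ.erase 0, (addRepCount s x : ℤ) = #s ^ 2 := by
    rw [add_sum_erase univ (fun x => (addRepCount s x : ℤ)) (mem_univ 0)]
    exact_mod_cast sum_addRepCount s
  have hsq : (E[s] : ℤ) = addRepCount s 0 ^ 2 + ∑ x ∈ univ.erase 0, (addRepCount s x : ℤ) ^ 2 := by
    rw [add_sum_erase univ (fun x => (addRepCount s x : ℤ) ^ 2) (mem_univ 0), addEnergy_eq_sum_sq]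
    push_cast
    rfl
  rw [addRepCount_zero hα] at hsum hsq
  rw [hsq]
  simp only [mul_sub, sum_sub_distrib, ← sq, mul_comm _ (2 : ℤ), ← mul_sum]
  linarith

lemma addRepCount_mul_sub_two_nonneg (hα : ∀ x : α, x + x = 0) (s : Finset α) {x : α}
    (hx : x ≠ 0) : 0 ≤ (addRepCount s x : ℤ) * (addRepCount s x - 2) := by
  rcases addRepCount_eq_zero_or_two_le hα s hx with h | h
  · simp [h]
  · have h' : (2 : ℤ) ≤ addRepCount s x := by exact_mod_cast h
    nlinarith

lemma le_addEnergy_self [Fintype α] (hα : ∀ x : α, x + x = 0) (s : Finset α) :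
    3 * (#s : ℤ) ^ 2 - 2 * #s ≤ E[s] := by
  rw [addEnergy_self_eq hα]
  exact le_add_of_nonneg_right <|
    sum_nonneg fun x hx => addRepCount_mul_sub_two_nonneg hα s (ne_of_mem_erase hx)

lemma addEnergy_self_eq_iff [Fintype α] (hα : ∀ x : α, x + x = 0) (s : Finset α) :
    (E[s] : ℤ) = 3 * #s ^ 2 - 2 * #s ↔ ∀ x ≠ 0, addRepCount s x ≤ 2 := by
  rw [addEnergy_self_eq hα, add_eq_left,
    sum_eq_zero_iff_of_nonneg fun x hx => addRepCount_mul_sub_two_nonneg hα s (ne_of_mem_erase hx)]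
  simp only [mem_erase, mem_univ, and_true, mul_eq_zero, sub_eq_zero]
  refine forall₂_congr fun x hx => ?_
  have := addRepCount_eq_zero_or_two_le hα s hx
  omega

end ExponentTwo

lemma add_self_eq_zero_zmod_two {n : ℕ} (x : Fin n → ZMod 2) : x + x = 0 :=
  funext fun i => CharTwo.add_self_eq_zero (x i)

lemma isSidon_iff_addRepCount_le_two {n : ℕ} (S : Finset (Fin n → ZMod 2)) :
    IsSidon (S : Set (Fin n → ZMod 2)) ↔ ∀ x ≠ 0, addRepCount S x ≤ 2 := by
  have hS2 {a b : Fin n → ZMod 2} : a + b = 0 ↔ a = b :=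
    add_eq_zero_iff_eq_of_add_self add_self_eq_zero_zmod_two
  constructor
  · intro hS x hx
    rcases (filter (fun p => p.1 + p.2 = x) (S ×ˢ S)).eq_empty_or_nonempty with h | ⟨⟨a, b⟩, hab⟩
    · simp [addRepCount, h]
    simp only [mem_filter, mem_product] at hab
    obtain ⟨⟨ha, hb⟩, rfl⟩ := hab
    refine (card_le_card fun ⟨c, d⟩ hcd => ?_).trans (card_le_two (a := (a, b)) (b := (b, a)))
    simp only [mem_filter, mem_product] at hcd
    obtain ⟨⟨hc, hd⟩, hcd⟩ := hcd
    have hpair := hS a ha b hb c hc d hd (mt hS2.2 hx) (mt hS2.2 (hcd ▸ hx)) hcd.symm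
    rcases Set.pair_eq_pair_iff.1 hpair with ⟨rfl, rfl⟩ | ⟨rfl, rfl⟩ <;> simp
  · intro h a ha b hb c hc d hd hab _ habcd
    rw [mem_coe] at ha hb hc hd
    by_contra hne
    rw [Set.pair_eq_pair_iff] at hne
    have hthree : #{(a, b), (b, a), (c, d)} = 3 := by
      refine card_eq_three.2 ⟨_, _, _, ?_, ?_, ?_, rfl⟩ <;> grind
    have hsub : {(a, b), (b, a), (c, d)} ⊆ filter (fun p => p.1 + p.2 = a + b) (S ×ˢ S) := by
      simp [insert_subset_iff, ha, hb, hc, hd, add_comm, habcd]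
    have := (card_le_card hsub).trans (h (a + b) (mt hS2.1 hab))
    omega

section Characters

variable {n : ℕ}

lemma neg_one_pow_val_add (s t : ZMod 2) :
    (-1 : ℤ) ^ (s + t).val = (-1) ^ s.val * (-1) ^ t.val := by
  revert s t
  decide

lemma dotp_eq_dotProduct (a x : Fin n → ZMod 2) : dotp a x = a ⬝ᵥ x := rfl

lemma chi_add_right (u x y : Fin n → ZMod 2) : chi u (x + y) = chi u x * chi u y := by
  rw [chi, dotp_eq_dotProduct, dotProduct_add, neg_one_pow_val_add]
  rfl

lemma chi_comm (u x : Fin n → ZMod 2) : chi u x = chi x u := by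
  rw [chi, chi, dotp_eq_dotProduct, dotProduct_comm]
  rfl

lemma chi_add_left (u v x : Fin n → ZMod 2) : chi (u + v) x = chi u x * chi v x := by
  rw [chi_comm, chi_add_right, chi_comm x, chi_comm x]

lemma chi_zero_right (u : Fin n → ZMod 2) : chi u 0 = 1 := by
  simp [chi, dotp]

lemma sum_chi_left (x : Fin n → ZMod 2) :
    ∑ u, chi u x = if x = 0 then 2 ^ n else 0 := by
  split_ifs with hx
  · simp [hx, chi_zero_right]
  obtain ⟨i, hi⟩ := Function.ne_iff.1 hx
  have hxi : x i = 1 := (by decide : ∀ z : ZMod 2, z ≠ 0 → z = 1) _ hi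
  have hsign : chi (Pi.single i 1) x = -1 := by
    rw [chi, dotp_eq_dotProduct, single_one_dotProduct, hxi]
    rfl
  -- translating `u` by `Pi.single i 1` flips the sign of every term
  have hflip := Equiv.sum_comp (Equiv.addRight (Pi.single i 1)) fun u => chi u x
  simp only [Equiv.coe_addRight, chi_add_left, hsign, mul_neg_one, sum_neg_distrib] at hflip
  linarith

lemma fourierS_sq (S : Finset (Fin n → ZMod 2)) (u : Fin n → ZMod 2) :
    fourierS S u ^ 2 = ∑ x, (addRepCount S x : ℤ) * chi u x := by
  rw [sq, fourierS, sum_mul_sum, ← sum_product']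
  simp_rw [← chi_add_right]
  rw [← sum_fiberwise _ (fun p => p.1 + p.2)]
  refine sum_congr rfl fun x _ => ?_
  rw [addRepCount, ← nsmul_eq_mul, ← sum_const]
  exact sum_congr rfl fun p hp => congrArg _ (mem_filter.1 hp).2

lemma sum_fourierS_pow_four (S : Finset (Fin n → ZMod 2)) :
    ∑ u, fourierS S u ^ 4 = 2 ^ n * E[S] := by
  set r : (Fin n → ZMod 2) → ℤ := fun x => addRepCount S x
  have hr : ∀ u, fourierS S u ^ 4 = ∑ x, ∑ y, r x * r y * chi u (x + y) := by
    intro u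
    rw [show 4 = 2 * 2 from rfl, pow_mul, fourierS_sq, sq, sum_mul_sum]
    simp_rw [chi_add_right]
    exact sum_congr rfl fun x _ => sum_congr rfl fun y _ => by ring
  calc ∑ u, fourierS S u ^ 4
      = ∑ x, ∑ y, r x * r y * ∑ u, chi u (x + y) := by
        simp_rw [hr, mul_sum]
        rw [sum_comm]
        exact sum_congr rfl fun x _ => sum_comm
    _ = ∑ x, 2 ^ n * r x ^ 2 := by
        simp_rw [sum_chi_left, add_eq_zero_iff_eq_of_add_self add_self_eq_zero_zmod_two]
        simp [sq, mul_comm]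
    _ = 2 ^ n * E[S] := by
        rw [← mul_sum, addEnergy_eq_sum_sq]
        push_cast
        rfl

end Characters

theorem stmt4 {n : ℕ} (S : Finset (Fin n → ZMod 2)) :
    (2 ^ n * (3 * (S.card : ℤ) ^ 2 - 2 * (S.card : ℤ))
        ≤ ∑ u : Fin n → ZMod 2, (fourierS S u) ^ 4)
      ∧ ((∑ u : Fin n → ZMod 2, (fourierS S u) ^ 4
            = 2 ^ n * (3 * (S.card : ℤ) ^ 2 - 2 * (S.card : ℤ)))
          ↔ IsSidon (S : Set (Fin n → ZMod 2))) := by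
  rw [sum_fourierS_pow_four]
  refine ⟨?_, ?_⟩
  · exact mul_le_mul_of_nonneg_left (le_addEnergy_self add_self_eq_zero_zmod_two S) (by positivity)
  · rw [mul_right_inj' (pow_ne_zero n two_ne_zero), addEnergy_self_eq_iff add_self_eq_zero_zmod_two,
      isSidon_iff_addRepCount_le_two]
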